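/- Key identity behind the main theorem: let P_N be orthogonal projection of ℝ^n onto an (n−k)-dimensional subspace N. Then vol_{n−k}(Z(P_N(2e₁),…,P_N(2eₙ))) = Σ_{S ⊆ {1,…,n}, |S| = n−k} vol_{n−k}(Z(P_N(2eᵢ) : i ∈ S)), where vol_{n−k} is (n−k)-dimensional Hausdorff measure on N. -/

import Mathlib

open MeasureTheory Finset

def zonotope {n m : ℕ} (v : Fin m → EuclideanSpace ℝ (Fin n)) :
    Set (EuclideanSpace ℝ (Fin n)) :=
  {x | ∃ l : Fin m → ℝ, (∀ i, l i ∈ Set.Icc (0 : ℝ) 1) ∧ x = ∑ i, l i • v i}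

/-- The zonotope generated by the vectors `v i` for `i ∈ S`. -/
def zonotopeOn {n : ℕ} (S : Finset (Fin n)) (v : Fin n → EuclideanSpace ℝ (Fin n)) :
    Set (EuclideanSpace ℝ (Fin n)) :=
  {x | ∃ l : Fin n → ℝ, (∀ i, l i ∈ Set.Icc (0 : ℝ) 1) ∧ x = ∑ i ∈ S, l i • v i}

/-!
Shephard's decomposition, by induction on the dimension `d` and on the number of generators.
Rotate a new generator `u` onto `‖u‖ • e_d`. Every line parallel to `e_d` meets the convex
zonotope `A` built so far in a segment, which adding `[0, u]` lengthens by `‖u‖` exactly when it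
is nonempty; so by Cavalieri the volume grows by `‖u‖` times the volume of the projection of `A`
to the first `d - 1` coordinates. That projection is the zonotope of the projected generators,
and by induction on `d` its volume splits over `(d - 1)`-subsets `T`. By the same formula,
`‖u‖` times the term of `T` is the volume of the zonotope of `T ∪ {u}`, because the zonotope of `T`
alone is flat. Every Haar measure is a multiple of Lebesgue measure, and `μH[d]` on the
`d`-dimensional subspace `N` is one of them.
-/

open Module
open scoped Pointwise

noncomputable section

section Module

variable {ι E F : Type*} [AddCommGroup E] [Module ℝ E] [AddCommGroup F] [Module ℝ F]

def finsetZonotope (S : Finset ι) (v : ι → E) : Set E :=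
  (fun l : ι → ℝ => ∑ i ∈ S, l i • v i) '' Set.univ.pi fun _ => Set.Icc 0 1

theorem zero_mem_finsetZonotope (S : Finset ι) (v : ι → E) : (0 : E) ∈ finsetZonotope S v :=
  ⟨0, fun _ _ => Set.left_mem_Icc.2 zero_le_one, by simp⟩

theorem finsetZonotope_insert [DecidableEq ι] {a : ι} {S : Finset ι} (ha : a ∉ S) (v : ι → E) :
    finsetZonotope (insert a S) v = finsetZonotope S v + segment ℝ 0 (v a) := by
  ext x
  simp only [finsetZonotope, segment_eq_image, Set.mem_add, Set.mem_image, Set.mem_univ_pi,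
    sum_insert ha, smul_zero, zero_add]
  constructor
  · rintro ⟨l, hl, rfl⟩
    exact ⟨_, ⟨l, hl, rfl⟩, _, ⟨l a, hl a, rfl⟩, add_comm _ _⟩
  · rintro ⟨_, ⟨l, hl, rfl⟩, _, ⟨t, ht, rfl⟩, rfl⟩
    refine ⟨Function.update l a t, fun i => ?_, ?_⟩
    · rcases eq_or_ne i a with rfl | hi
      · simpa using ht
      · simpa [hi] using hl i
    · rw [Function.update_self, add_comm]
      congr 1
      exact sum_congr rfl fun i hi => by rw [Function.update_of_ne (ne_of_mem_of_not_mem hi ha)]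

theorem image_finsetZonotope (f : E →ₗ[ℝ] F) (S : Finset ι) (v : ι → E) :
    f '' finsetZonotope S v = finsetZonotope S (f ∘ v) := by
  simp only [finsetZonotope, Set.image_image, map_sum, map_smul, Function.comp_apply]

theorem finsetZonotope_subset_span (S : Finset ι) (v : ι → E) :
    finsetZonotope S v ⊆ Submodule.span ℝ (v '' S) := by
  rintro _ ⟨l, -, rfl⟩
  exact Submodule.sum_mem _ fun i hi =>
    Submodule.smul_mem _ _ (Submodule.subset_span ⟨i, hi, rfl⟩)

theorem convex_finsetZonotope (S : Finset ι) (v : ι → E) : Convex ℝ (finsetZonotope S v) :=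
  (convex_pi fun _ _ => convex_Icc 0 1).is_linear_image
    ⟨fun l m => by simp [add_smul, sum_add_distrib], fun c l => by simp [mul_smul, smul_sum]⟩

theorem isCompact_finsetZonotope [TopologicalSpace E] [ContinuousAdd E] [ContinuousSMul ℝ E]
    (S : Finset ι) (v : ι → E) : IsCompact (finsetZonotope S v) :=
  (isCompact_univ_pi fun _ => isCompact_Icc).image <|
    continuous_finsetSum _ fun i _ => (continuous_apply i).smul continuous_const

end Module

theorem addHaar_finsetZonotope_eq_zero_of_card_lt {ι E : Type*} [NormedAddCommGroup E]
    [NormedSpace ℝ E] [MeasurableSpace E] [BorelSpace E] [FiniteDimensional ℝ E]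
    (μ : Measure E) [μ.IsAddHaarMeasure] {S : Finset ι} (v : ι → E)
    (hS : #S < finrank ℝ E) : μ (finsetZonotope S v) = 0 := by
  classical
  refine measure_mono_null (finsetZonotope_subset_span S v) (Measure.addHaar_submodule μ _ ?_)
  intro htop
  have := finrank_span_finset_le_card (R := ℝ) (S.image v)
  rw [coe_image, Set.finrank, htop, finrank_top] at this
  exact (this.trans card_image_le).not_gt hS

theorem isCompact_segment {E : Type*} [AddCommGroup E] [Module ℝ E] [TopologicalSpace E]
    [IsTopologicalAddGroup E] [ContinuousSMul ℝ E] (x y : E) : IsCompact (segment ℝ x y) := by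
  rw [← convexHull_pair (𝕜 := ℝ)]
  exact (Set.toFinite _).isCompact_convexHull (𝕜 := ℝ)

theorem Set.Icc_add_Icc_zero {a b c : ℝ} (hab : a ≤ b) (hc : 0 ≤ c) :
    Icc a b + Icc 0 c = Icc a (b + c) := by
  refine (Icc_add_Icc_subset _ _ _ _).trans_eq (by rw [add_zero]) |>.antisymm fun x hx => ?_
  rcases le_total x b with hxb | hbx
  · exact ⟨x, ⟨hx.1, hxb⟩, 0, left_mem_Icc.2 hc, add_zero x⟩
  · exact ⟨b, right_mem_Icc.2 hab, x - b, ⟨by linarith, by linarith [hx.2]⟩, by ring⟩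

theorem Real.volume_add_Icc_zero {s : Set ℝ} (hs : Convex ℝ s) (hsc : IsCompact s)
    (hne : s.Nonempty) {c : ℝ} (hc : 0 ≤ c) :
    volume (s + Set.Icc 0 c) = volume s + ENNReal.ofReal c := by
  have hab : sInf s ≤ sSup s := csInf_le_csSup hne hsc.bddBelow hsc.bddAbove
  rw [eq_Icc_of_connected_compact ⟨hne, hs.isPreconnected⟩ hsc, Set.Icc_add_Icc_zero hab hc,
    Real.volume_Icc, Real.volume_Icc, ← ENNReal.ofReal_add (sub_nonneg.2 hab) hc,
    add_sub_right_comm]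

section Slices

variable {Y : Type*} [AddCommGroup Y] [Module ℝ Y]

theorem preimage_prodMk_add_segment (C : Set (ℝ × Y)) (c : ℝ) (y : Y) :
    (·, y) ⁻¹' (C + segment ℝ 0 (c, 0)) = (·, y) ⁻¹' C + segment ℝ 0 c := by
  rw [show (0 : ℝ × Y) = (0, 0) from rfl, ← Prod.image_mk_segment_left]
  ext t
  simp only [Set.mem_preimage, Set.mem_add, Set.mem_image]
  constructor
  · rintro ⟨⟨a, b⟩, hab, _, ⟨s, hs, rfl⟩, h⟩
    simp only [Prod.mk_add_mk, add_zero, Prod.mk.injEq] at h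
    obtain ⟨rfl, rfl⟩ := h
    exact ⟨a, hab, s, hs, rfl⟩
  · rintro ⟨a, ha, s, hs, rfl⟩
    exact ⟨(a, y), ha, (s, 0), ⟨s, hs, rfl⟩, by simp⟩

theorem convex_preimage_prodMk {C : Set (ℝ × Y)} (hC : Convex ℝ C) (y : Y) :
    Convex ℝ ((·, y) ⁻¹' C) := by
  have : (·, y) = AffineMap.lineMap ((0 : ℝ), y) (1, y) := by
    ext t <;> simp [AffineMap.lineMap_apply]
  rw [this]
  exact hC.affine_preimage _

end Slices

theorem isCompact_preimage_prodMk {Y : Type*} [TopologicalSpace Y] [T2Space Y]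
    {C : Set (ℝ × Y)} (hC : IsCompact C) (y : Y) : IsCompact ((·, y) ⁻¹' C) :=
  (hC.image continuous_fst).of_isClosed_subset (hC.isClosed.preimage (by fun_prop))
    fun t ht => ⟨_, ht, rfl⟩

theorem volume_prod_add_segment {Y : Type*} [NormedAddCommGroup Y] [NormedSpace ℝ Y]
    [MeasurableSpace Y] [BorelSpace Y] (ν : Measure Y) [SFinite ν]
    {C : Set (ℝ × Y)} (hC : Convex ℝ C) (hCc : IsCompact C) {c : ℝ} (hc : 0 ≤ c) :
    (volume.prod ν) (C + segment ℝ 0 (c, 0))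
      = (volume.prod ν) C + ENNReal.ofReal c * ν (Prod.snd '' C) := by
  have hsnd : MeasurableSet (Prod.snd '' C) := (hCc.image continuous_snd).isClosed.measurableSet
  have hslice (y : Y) : volume ((·, y) ⁻¹' (C + segment ℝ 0 (c, 0)))
      = volume ((·, y) ⁻¹' C) + (Prod.snd '' C).indicator (fun _ => ENNReal.ofReal c) y := by
    rw [preimage_prodMk_add_segment, segment_eq_Icc hc]
    by_cases hy : y ∈ Prod.snd '' C
    · obtain ⟨⟨t, _⟩, ht, rfl⟩ := hy
      rw [Set.indicator_of_mem (Set.mem_image_of_mem _ ht)]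
      exact Real.volume_add_Icc_zero (convex_preimage_prodMk hC _)
        (isCompact_preimage_prodMk hCc _) ⟨t, ht⟩ hc
    · have : (·, y) ⁻¹' C = ∅ := Set.eq_empty_of_forall_notMem fun t ht => hy ⟨_, ht, rfl⟩
      simp [this, Set.indicator_of_notMem hy]
  rw [Measure.prod_apply_symm ((hCc.add (isCompact_segment _ _)).isClosed.measurableSet),
    Measure.prod_apply_symm hCc.isClosed.measurableSet, lintegral_congr hslice,
    lintegral_add_right _ (measurable_const.indicator hsnd), lintegral_indicator_const hsnd]

def splitLast (D : ℕ) : EuclideanSpace ℝ (Fin (D + 1)) →ₗ[ℝ] ℝ × EuclideanSpace ℝ (Fin D) where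
  toFun x := (x (Fin.last D), WithLp.toLp 2 fun j => x j.castSucc)
  map_add' _ _ := rfl
  map_smul' _ _ := rfl

@[simp]
theorem splitLast_apply (D : ℕ) (x : EuclideanSpace ℝ (Fin (D + 1))) :
    splitLast D x = (x (Fin.last D), WithLp.toLp 2 fun j => x j.castSucc) :=
  rfl

def splitLastEquiv (D : ℕ) : EuclideanSpace ℝ (Fin (D + 1)) ≃ᵐ ℝ × EuclideanSpace ℝ (Fin D) :=
  (MeasurableEquiv.toLp 2 _).symm.trans <|
    (MeasurableEquiv.piFinSuccAbove (fun _ => ℝ) (Fin.last D)).trans <|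
      (MeasurableEquiv.refl ℝ).prodCongr (MeasurableEquiv.toLp 2 _)

theorem coe_splitLastEquiv (D : ℕ) : ⇑(splitLastEquiv D) = splitLast D := by
  ext x j
  · rfl
  · simp [splitLastEquiv, MeasurableEquiv.piFinSuccAbove, Fin.insertNthEquiv]
    rfl

theorem measurePreserving_splitLastEquiv (D : ℕ) : MeasurePreserving (splitLastEquiv D) :=
  (PiLp.volume_preserving_ofLp _).trans <|
    (volume_preserving_piFinSuccAbove (fun _ => ℝ) (Fin.last D)).trans <|
      (MeasurePreserving.id _).prod (PiLp.volume_preserving_toLp _)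

theorem volume_image_splitLast (D : ℕ) (s : Set (EuclideanSpace ℝ (Fin (D + 1)))) :
    volume (splitLast D '' s) = volume s := by
  rw [← coe_splitLastEquiv, MeasurableEquiv.image_eq_preimage_symm,
    (measurePreserving_splitLastEquiv D).symm.measure_preimage_equiv]

theorem splitLast_smul_single_last (D : ℕ) (c : ℝ) :
    splitLast D (c • EuclideanSpace.single (Fin.last D) 1) = (c, 0) := by
  ext j <;> simp

def dropLast (D : ℕ) : EuclideanSpace ℝ (Fin (D + 1)) →ₗ[ℝ] EuclideanSpace ℝ (Fin D) :=
  LinearMap.snd ℝ ℝ _ ∘ₗ splitLast D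

theorem volume_add_segment_smul_single_last {D : ℕ} {A : Set (EuclideanSpace ℝ (Fin (D + 1)))}
    (hA : Convex ℝ A) (hAc : IsCompact A) {c : ℝ} (hc : 0 ≤ c) :
    volume (A + segment ℝ 0 (c • EuclideanSpace.single (Fin.last D) 1))
      = volume A + ENNReal.ofReal c * volume (dropLast D '' A) := by
  have himg : splitLast D '' (A + segment ℝ 0 (c • EuclideanSpace.single (Fin.last D) 1))
      = splitLast D '' A + segment ℝ 0 (c, 0) := by
    rw [Set.image_add, ← splitLast_smul_single_last, ← (splitLast D).coe_toAffineMap,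
      image_segment, LinearMap.coe_toAffineMap, map_zero]
  rw [← volume_image_splitLast, himg, Measure.volume_eq_prod,
    volume_prod_add_segment _ (hA.linear_image _)
      (hAc.image (splitLast D).continuous_of_finiteDimensional) hc,
    ← Measure.volume_eq_prod, volume_image_splitLast, Set.image_image]
  rfl

theorem volume_finsetZonotope_insert_of_eq_smul_single_last {ι : Type*} [DecidableEq ι]
    {D : ℕ} {a : ι} {S : Finset ι} (ha : a ∉ S) {v : ι → EuclideanSpace ℝ (Fin (D + 1))}
    {c : ℝ} (hc : 0 ≤ c) (hva : v a = c • EuclideanSpace.single (Fin.last D) 1) :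
    volume (finsetZonotope (insert a S) v)
      = volume (finsetZonotope S v)
        + ENNReal.ofReal c * volume (finsetZonotope S (dropLast D ∘ v)) := by
  rw [finsetZonotope_insert ha, hva, volume_add_segment_smul_single_last
    (convex_finsetZonotope _ _) (isCompact_finsetZonotope _ _) hc, image_finsetZonotope]

theorem volume_finsetZonotope_comp_linearIsometryEquiv {ι E : Type*} [NormedAddCommGroup E]
    [InnerProductSpace ℝ E] [FiniteDimensional ℝ E] [MeasurableSpace E] [BorelSpace E]
    (g : E ≃ₗᵢ[ℝ] E) (S : Finset ι) (v : ι → E) :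
    volume (finsetZonotope S (g ∘ v)) = volume (finsetZonotope S v) := by
  rw [← g.coe_toLinearEquiv, ← LinearEquiv.coe_coe, ← image_finsetZonotope, LinearEquiv.coe_coe,
    g.coe_toLinearEquiv, ← g.coe_toMeasurableEquiv, MeasurableEquiv.image_eq_preimage_symm]
  exact g.symm.measurePreserving.measure_preimage_equiv _

theorem Finset.sum_powersetCard_succ_insert {α M : Type*} [DecidableEq α] [AddCommMonoid M]
    {a : α} {s : Finset α} (ha : a ∉ s) (n : ℕ) (f : Finset α → M) :
    ∑ t ∈ (insert a s).powersetCard (n + 1), f t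
      = ∑ t ∈ s.powersetCard (n + 1), f t + ∑ t ∈ s.powersetCard n, f (insert a t) := by
  have hnotMem : ∀ t ∈ s.powersetCard n, a ∉ t := fun t ht hat =>
    ha ((mem_powersetCard.1 ht).1 hat)
  rw [powersetCard_succ_insert ha, sum_union, sum_image]
  · intro t ht t' ht' h
    rw [← erase_insert (hnotMem t ht), ← erase_insert (hnotMem t' ht'), h]
  · refine disjoint_left.2 fun t ht ht' => ?_
    obtain ⟨t', -, rfl⟩ := mem_image.1 ht'
    exact ha ((mem_powersetCard.1 ht).1 (mem_insert_self a t'))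

theorem volume_finsetZonotope_eq_sum {ι : Type*} (D : ℕ) (F : Finset ι)
    (v : ι → EuclideanSpace ℝ (Fin D)) :
    volume (finsetZonotope F v) = ∑ S ∈ F.powersetCard D, volume (finsetZonotope S v) := by
  classical
  induction D generalizing F with
  | zero => simp [volume_euclideanSpace_eq_dirac, zero_mem_finsetZonotope]
  | succ D ih =>
    induction F using Finset.induction_on generalizing v with
    | empty =>
      rw [powersetCard_eq_empty.2 (by simp), sum_empty]
      exact addHaar_finsetZonotope_eq_zero_of_card_lt _ _ (by simp)
    | insert a F ha ihF =>
      obtain ⟨g, hg⟩ : ∃ g : _ ≃ₗᵢ[ℝ] _,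
          g (v a) = ‖v a‖ • EuclideanSpace.single (Fin.last D) (1 : ℝ) :=
        ⟨_, Submodule.reflection_sub (by simp [norm_smul])⟩
      rw [← volume_finsetZonotope_comp_linearIsometryEquiv g, sum_congr rfl fun S _ =>
        (volume_finsetZonotope_comp_linearIsometryEquiv g S v).symm]
      have hins : ∀ T ⊆ F, volume (finsetZonotope (insert a T) (g ∘ v))
          = volume (finsetZonotope T (g ∘ v))
            + ENNReal.ofReal ‖v a‖ * volume (finsetZonotope T (dropLast D ∘ g ∘ v)) :=
        fun T hT => volume_finsetZonotope_insert_of_eq_smul_single_last (fun h => ha (hT h))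
          (norm_nonneg _) hg
      rw [sum_powersetCard_succ_insert ha, hins F subset_rfl, ihF, ih, mul_sum]
      congr 1
      refine sum_congr rfl fun T hT => ?_
      obtain ⟨hTF, hTcard⟩ := mem_powersetCard.1 hT
      rw [hins T hTF, addHaar_finsetZonotope_eq_zero_of_card_lt volume (g ∘ v) (by simp [hTcard]),
        zero_add]

theorem addHaar_finsetZonotope_eq_sum {ι E : Type*} [NormedAddCommGroup E] [NormedSpace ℝ E]
    [MeasurableSpace E] [BorelSpace E] [FiniteDimensional ℝ E] (μ : Measure E)
    [μ.IsAddHaarMeasure] (F : Finset ι) (v : ι → E) :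
    μ (finsetZonotope F v) = ∑ S ∈ F.powersetCard (finrank ℝ E), μ (finsetZonotope S v) := by
  let e : E ≃L[ℝ] EuclideanSpace ℝ (Fin (finrank ℝ E)) :=
    ContinuousLinearEquiv.ofFinrankEq (by simp)
  obtain ⟨c, hc⟩ : ∃ c : NNReal, μ.map e = c • volume :=
    ⟨_, Measure.isAddLeftInvariant_eq_smul _ _⟩
  have hμ (S : Finset ι) : μ (finsetZonotope S v) = c * volume (finsetZonotope S (e ∘ v)) := by
    rw [← e.injective.preimage_image (finsetZonotope S v),
      ← MeasurableEmbedding.map_apply (f := e) e.toHomeomorph.measurableEmbedding, hc]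
    exact congrArg (c • volume : Measure _) (image_finsetZonotope e.toLinearEquiv.toLinearMap S v)
  rw [hμ, volume_finsetZonotope_eq_sum, mul_sum]
  exact sum_congr rfl fun S _ => (hμ S).symm

theorem zonotope_eq_finsetZonotope {n m : ℕ} (v : Fin m → EuclideanSpace ℝ (Fin n)) :
    zonotope v = finsetZonotope univ v := by
  ext x
  simp only [zonotope, finsetZonotope, Set.mem_ofPred_eq, Set.mem_image, Set.mem_univ_pi,
    eq_comm]

theorem zonotopeOn_eq_finsetZonotope {n : ℕ} (S : Finset (Fin n))
    (v : Fin n → EuclideanSpace ℝ (Fin n)) : zonotopeOn S v = finsetZonotope S v := by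
  ext x
  simp only [zonotopeOn, finsetZonotope, Set.mem_ofPred_eq, Set.mem_image, Set.mem_univ_pi,
    eq_comm]

end

theorem volume_proj_zonotope_eq_sum_general {n k : ℕ}
    (N : Submodule ℝ (EuclideanSpace ℝ (Fin n)))
    (hN : Module.finrank ℝ N = n - k)
    (P : EuclideanSpace ℝ (Fin n) → EuclideanSpace ℝ (Fin n))
    (hP : P = fun x => (N.orthogonalProjection x : EuclideanSpace ℝ (Fin n))) :
    μH[(n - k : ℕ)]
        (zonotope fun i : Fin n =>
          P ((2 : ℝ) • EuclideanSpace.single i (1 : ℝ))) =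
      ∑ S ∈ Finset.univ.powersetCard (n - k),
        μH[(n - k : ℕ)]
          (zonotopeOn S fun i : Fin n =>
            P ((2 : ℝ) • EuclideanSpace.single i (1 : ℝ))) := by
  subst hP
  set w : Fin n → N := fun i => N.orthogonalProjectionOnto ((2 : ℝ) • EuclideanSpace.single i 1)
  have hμH (S : Finset (Fin n)) : μH[(n - k : ℕ)] (finsetZonotope S (N.subtype ∘ w))
      = μH[(n - k : ℕ)] (finsetZonotope S w) := by
    rw [← image_finsetZonotope]
    exact isometry_subtype_coe.hausdorffMeasure_image (Or.inl (Nat.cast_nonneg _)) _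
  have : (μH[(n - k : ℕ)] : Measure N).IsAddHaarMeasure := by
    rw [← hN]
    infer_instance
  rw [zonotope_eq_finsetZonotope]
  simp only [zonotopeOn_eq_finsetZonotope]
  change μH[_] (finsetZonotope univ (N.subtype ∘ w))
    = ∑ S ∈ _, μH[_] (finsetZonotope S (N.subtype ∘ w))
  simp only [hμH]
  rw [addHaar_finsetZonotope_eq_sum, hN]

theorem volume_proj_zonotope_eq_sum {n k : ℕ} (hk : k ≤ n)
    (N : Submodule ℝ (EuclideanSpace ℝ (Fin n)))
    (hN : Module.finrank ℝ N = n - k)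
    (P : EuclideanSpace ℝ (Fin n) → EuclideanSpace ℝ (Fin n))
    (hP : P = fun x => (N.orthogonalProjection x : EuclideanSpace ℝ (Fin n))) :
    μH[(n - k : ℕ)]
        (zonotope fun i : Fin n =>
          P ((2 : ℝ) • EuclideanSpace.single i (1 : ℝ))) =
      ∑ S ∈ Finset.univ.powersetCard (n - k),
        μH[(n - k : ℕ)]
          (zonotopeOn S fun i : Fin n =>
            P ((2 : ℝ) • EuclideanSpace.single i (1 : ℝ))) :=
  volume_proj_zonotope_eq_sum_general N hN P hP
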